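/- arXiv:1901.04552 — 2 statements merged into one kernel-verified Lean document; each statement's English description precedes it below -/
import Mathlib

section
/- Let g be a Lie algebra graded by a finite set of nonzero linear functionals Σ on an abelian subalgebra a via root spaces g_λ with [g_λ,g_μ] ⊆ g_{λ+μ}, and fix a linear functional ℓ on the span of Σ taking positive values on a subset Σ⁺ with Σ = Σ⁺ ∪ (−Σ⁺). Then n = ⊕_{λ∈Σ⁺} g_λ is a nilpotent Lie subalgebra of g. -/
/-!
Bracketing root spaces adds roots and `ℓ` is positive on `Σ⁺ + Σ⁺`, so `Σ = Σ⁺ ∪ −Σ⁺` forces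
`[n, n] ⊆ n`. For nilpotency grade by `ℓ`: bracketing with `n` raises the `ℓ`-degree by at least
`ε = min_{Σ⁺} ℓ > 0`, while only the finitely many degrees `ℓ(Σ) ∪ {0}` occur. Hence the
filtration of `n` by the superlevel sums `⨆_{ℓ λ ≥ k ε} g_λ` contains its lower central series
and vanishes for large `k`.
-/

open Filter Pointwise

theorem LieModule.isNilpotent_of_filtration {R L M : Type*} [CommRing R] [LieRing L]
    [LieAlgebra R L] [AddCommGroup M] [Module R M] [LieRingModule L M] [LieModule R L M]
    (F : ℕ → Submodule R M) (h0 : F 0 = ⊤)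
    (hlie : ∀ k (x : L) (m : M), m ∈ F k → ⁅x, m⁆ ∈ F (k + 1)) {K : ℕ} (hK : F K = ⊥) :
    LieModule.IsNilpotent L M := by
  have hle : ∀ k, (lowerCentralSeries R L M k : Submodule R M) ≤ F k := by
    intro k
    induction k with
    | zero => simp [h0]
    | succ k ih =>
      rw [lowerCentralSeries_succ, LieSubmodule.lieIdeal_oper_eq_linear_span', Submodule.span_le]
      rintro _ ⟨x, -, m, hm, rfl⟩
      exact hlie k x m (ih hm)
  refine (LieModule.isNilpotent_iff R L M).2 ⟨K, eq_bot_iff.2 fun m hm => ?_⟩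
  simpa [hK] using hle K hm

theorem Finset.exists_pos_forall_le {α : Type*} {s : Finset α} {f : α → ℝ}
    (hf : ∀ a ∈ s, 0 < f a) : ∃ ε : ℝ, 0 < ε ∧ ∀ a ∈ s, ε ≤ f a :=
  (eventually_mem_nhdsWithin (a := 0) (s := Set.Ioi 0) |>.and <|
    (eventually_all_finset s).2 fun a ha =>
      eventually_nhdsWithin_of_eventually_nhds (eventually_le_nhds (hf a ha))).exists

section Grading

variable {R L W : Type*} [CommRing R] [LieRing L] [LieAlgebra R L] (g : W → Submodule R L)

theorem lie_mem_biSup_add [AddCommMonoid W]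
    (hg : ∀ lam mu : W, ∀ x ∈ g lam, ∀ y ∈ g mu, ⁅x, y⁆ ∈ g (lam + mu))
    {S T : Set W} {x y : L} (hx : x ∈ ⨆ lam ∈ S, g lam) (hy : y ∈ ⨆ mu ∈ T, g mu) :
    ⁅x, y⁆ ∈ ⨆ nu ∈ S + T, g nu := by
  set P := ⨆ nu ∈ S + T, g nu
  have hgen : ∀ lam ∈ S, ∀ x ∈ g lam, ⁅x, y⁆ ∈ P := by
    intro lam hlam x hx
    rw [iSup_subtype'] at hy
    refine Submodule.iSup_induction _ (motive := fun y => ⁅x, y⁆ ∈ P) hy ?_ (by simp) ?_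
    · exact fun mu y hy => le_biSup g (Set.add_mem_add hlam mu.2) (hg lam mu x hx y hy)
    · exact fun y y' h h' => by rw [lie_add]; exact P.add_mem h h'
  rw [iSup_subtype'] at hx
  refine Submodule.iSup_induction _ (motive := fun x => ⁅x, y⁆ ∈ P) hx ?_ (by simp) ?_
  · exact fun lam x hx => hgen lam lam.2 x hx
  · exact fun x x' h h' => by rw [add_lie]; exact P.add_mem h h'

section Superlevel

variable [AddCommMonoid W] (ell : W →+ ℝ)

def superlevelSum (c : ℝ) : Submodule R L :=
  ⨆ lam ∈ {lam | c ≤ ell lam}, g lam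

theorem superlevelSum_anti : Antitone (superlevelSum g ell) :=
  fun _ _ hab => biSup_mono fun _ (h : _ ≤ _) => hab.trans h

theorem lie_mem_superlevelSum
    (hg : ∀ lam mu : W, ∀ x ∈ g lam, ∀ y ∈ g mu, ⁅x, y⁆ ∈ g (lam + mu))
    {a b : ℝ} {x y : L} (hx : x ∈ superlevelSum g ell a) (hy : y ∈ superlevelSum g ell b) :
    ⁅x, y⁆ ∈ superlevelSum g ell (a + b) := by
  refine (biSup_mono ?_ : _ ≤ superlevelSum g ell (a + b)) (lie_mem_biSup_add g hg hx hy)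
  rintro _ ⟨lam, hlam, mu, hmu, rfl⟩
  simp only [Set.mem_ofPred_eq, map_add] at hlam hmu ⊢
  linarith

theorem eventually_superlevelSum_eq_bot (Sig : Finset W)
    (hzero : ∀ nu : W, nu ∉ Sig → nu ≠ 0 → g nu = ⊥) :
    ∀ᶠ c in atTop, superlevelSum g ell c = ⊥ := by
  filter_upwards [eventually_gt_atTop 0,
    (eventually_all_finset Sig).2 fun lam _ => eventually_gt_atTop (ell lam)] with c hc hSig
  refine eq_bot_iff.2 (iSup₂_le fun nu (hnu : c ≤ ell nu) => (hzero nu ?_ ?_).le)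
  · exact fun h => (hSig nu h).not_ge hnu
  · rintro rfl
    simp only [map_zero] at hnu
    linarith

end Superlevel

theorem le_biSup_of_pos [AddCommGroup W] (ell : W →+ ℝ) (Sig SigP : Finset W)
    (hzero : ∀ nu : W, nu ∉ Sig → nu ≠ 0 → g nu = ⊥) (hpos : ∀ lam ∈ SigP, 0 < ell lam)
    (hunion : ∀ lam ∈ Sig, lam ∈ SigP ∨ -lam ∈ SigP) {nu : W} (hnu : 0 < ell nu) :
    g nu ≤ ⨆ lam ∈ SigP, g lam := by
  by_cases hS : nu ∈ Sig
  · rcases hunion nu hS with h | h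
    · exact le_biSup g h
    · have := hpos _ h
      rw [map_neg] at this
      linarith
  · rw [hzero nu hS (by rintro rfl; simp at hnu)]
    exact bot_le

end Grading

theorem stmt_8_general {L W : Type*} [LieRing L] [LieAlgebra ℝ L]
    [AddCommGroup W] [Module ℝ W]
    (g : W → Submodule ℝ L) (Sig SigP : Finset W)
    (hzero : ∀ ν : W, ν ∉ Sig → ν ≠ 0 → g ν = ⊥)
    (hbracket : ∀ lam mu : W, ∀ x ∈ g lam, ∀ y ∈ g mu, ⁅x, y⁆ ∈ g (lam + mu))
    (ell : W →ₗ[ℝ] ℝ) (hpos : ∀ lam ∈ SigP, 0 < ell lam)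
    (hunion : ∀ lam ∈ Sig, lam ∈ SigP ∨ -lam ∈ SigP) :
    ∃ n : LieSubalgebra ℝ L,
      n.toSubmodule = (⨆ lam ∈ SigP, g lam) ∧ LieModule.IsNilpotent n n := by
  set N := ⨆ lam ∈ SigP, g lam
  have hclosed {x y : L} (hx : x ∈ N) (hy : y ∈ N) : ⁅x, y⁆ ∈ N := by
    refine (iSup₂_le fun nu hnu => ?_ : _ ≤ N) (lie_mem_biSup_add g hbracket hx hy)
    obtain ⟨lam, hlam, mu, hmu, rfl⟩ := hnu
    refine le_biSup_of_pos g ell.toAddMonoidHom Sig SigP hzero hpos hunion ?_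
    simpa using add_pos (hpos lam hlam) (hpos mu hmu)
  let n : LieSubalgebra ℝ L := { toSubmodule := N, lie_mem' := hclosed }
  refine ⟨n, rfl, ?_⟩
  obtain ⟨ε, hε, hεle⟩ := SigP.exists_pos_forall_le hpos
  have hN : N ≤ superlevelSum g ell.toAddMonoidHom ε := biSup_mono hεle
  obtain ⟨K, hK⟩ := ((tendsto_id.atTop_nsmul_const hε).eventually
    (eventually_superlevelSum_eq_bot g ell.toAddMonoidHom Sig hzero)).exists
  refine LieModule.isNilpotent_of_filtration (K := K)
    (fun k => (superlevelSum g ell.toAddMonoidHom (k • ε)).comap n.toSubmodule.subtype) ?_ ?_ ?_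
  · refine eq_top_iff.2 fun x _ => ?_
    rw [zero_smul]
    exact superlevelSum_anti g _ hε.le (hN x.2)
  · intro k x m hm
    rw [Submodule.mem_comap, succ_nsmul']
    exact lie_mem_superlevelSum g _ hbracket (hN x.2) hm
  · rw [id] at hK
    simp only [hK, Submodule.comap_bot]
    exact Submodule.ker_subtype _

/-- Given a root-space grading of g over a finite set Σ of nonzero functionals, with
[g_λ, g_μ] ⊆ g_{λ+μ}, g_ν = 0 for ν ∉ Σ ∪ {0}, and a positivity functional ℓ positive
on Σ⁺ with Σ = Σ⁺ ∪ (−Σ⁺), the sum n = ⊕_{λ∈Σ⁺} g_λ is a nilpotent Lie subalgebra. -/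
theorem stmt_8 {L W : Type*} [LieRing L] [LieAlgebra ℝ L] [FiniteDimensional ℝ L]
    [AddCommGroup W] [Module ℝ W]
    (g : W → Submodule ℝ L) (Sig SigP : Finset W)
    (hSub : SigP ⊆ Sig)
    (hroots : ∀ lam ∈ Sig, lam ≠ (0 : W))
    (hzero : ∀ ν : W, ν ∉ Sig → ν ≠ 0 → g ν = ⊥)
    (hbracket : ∀ lam mu : W, ∀ x ∈ g lam, ∀ y ∈ g mu, ⁅x, y⁆ ∈ g (lam + mu))
    (ell : W →ₗ[ℝ] ℝ) (hpos : ∀ lam ∈ SigP, 0 < ell lam)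
    (hunion : ∀ lam ∈ Sig, lam ∈ SigP ∨ -lam ∈ SigP) :
    ∃ n : LieSubalgebra ℝ L,
      n.toSubmodule = (⨆ lam ∈ SigP, g lam) ∧ LieModule.IsNilpotent n n :=
  stmt_8_general g Sig SigP hzero hbracket ell hpos hunion
end

section
/- Let ∇ be the bilinear map on a ⊕ n determined by the Koszul-type formula ⟨∇_X Y, Z⟩_{AN} = (1/2)(⟨[X,Y],Z⟩_{AN} − ⟨[Y,Z],X⟩_{AN} − ⟨[X,Z],Y⟩_{AN}). Then for all X, Y, Z ∈ a ⊕ n, ⟨∇_X Y, Z⟩_{AN} = (1/4)⟨[X,Y] + [θX,Y] − [X,θY], Z⟩, where ⟨·,·⟩ = k·B_θ. -/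
/-!
With `B_θ(x, y) = -B(θx, y)`, invariance of the Killing form `B` together with `θ² = 1` makes
`ad x` adjoint to `-ad (θx)` for `B_θ`. Brackets of `a ⊕ n` lie in `n`, which is `B_θ`-orthogonal
to `a`, so on a bracket the form `⟨·,·⟩_{AN}` is just `(k/2) B_θ`. Moving `Y` resp. `X` across the
last two Koszul terms with the adjoint rule turns all three terms into `B_θ(·, Z)`.
-/

section CartanForm

variable {R L : Type*} [CommRing R] [LieRing L] [LieAlgebra R L]

noncomputable def cartanForm (θ : L →ₗ⁅R⁆ L) : LinearMap.BilinForm R L :=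
  -(killingForm R L).compl₁₂ (θ : L →ₗ[R] L) LinearMap.id

theorem cartanForm_apply (θ : L →ₗ⁅R⁆ L) (x y : L) :
    cartanForm θ x y = -killingForm R L (θ x) y :=
  rfl

theorem killingForm_involution_apply_left {θ : L →ₗ⁅R⁆ L} (hθ : ∀ x, θ (θ x) = x) (x y : L) :
    killingForm R L (θ x) y = killingForm R L x (θ y) := by
  let e : L ≃ₗ⁅R⁆ L := { θ with invFun := θ, left_inv := hθ, right_inv := hθ }
  calc killingForm R L (θ x) y = killingForm R L (e (θ x)) (e y) :=
        (LieAlgebra.killingForm_of_equiv_apply e _ _).symm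
    _ = killingForm R L (θ (θ x)) (θ y) := rfl
    _ = killingForm R L x (θ y) := by rw [hθ]

theorem cartanForm_comm {θ : L →ₗ⁅R⁆ L} (hθ : ∀ x, θ (θ x) = x) (x y : L) :
    cartanForm θ x y = cartanForm θ y x := by
  rw [cartanForm_apply, cartanForm_apply, killingForm_involution_apply_left hθ,
    LieModule.traceForm_comm]

theorem cartanForm_lie_apply {θ : L →ₗ⁅R⁆ L} (hθ : ∀ x, θ (θ x) = x) (x y z : L) :
    cartanForm θ ⁅x, y⁆ z = -cartanForm θ ⁅θ x, z⁆ y := by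
  rw [cartanForm_comm hθ ⁅θ x, z⁆, cartanForm_apply, cartanForm_apply, LieHom.map_lie,
    LieModule.traceForm_apply_lie_apply', neg_neg]

end CartanForm

theorem weighted_proj_apply_eq_half_apply {M : Type*} [AddCommGroup M] [Module ℝ M]
    (B : LinearMap.BilinForm ℝ M) (πa πn : M →ₗ[ℝ] M) (k : ℝ) {u v : M}
    (hua : πa u = 0) (hun : πn u = u) (hv : πa v + πn v = v) (horth : B u (πa v) = 0) :
    k * B (πa u) (πa v) + (k / 2) * B (πn u) (πn v) = (k / 2) * B u v := by
  conv_rhs => rw [← hv]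
  simp only [hua, hun, map_zero, LinearMap.zero_apply, map_add, horth]
  ring

theorem stmt_15_general {L : Type*} [LieRing L] [LieAlgebra ℝ L] [FiniteDimensional ℝ L]
    (θ : L →ₗ⁅ℝ⁆ L) (hinv : ∀ x, θ (θ x) = x)
    (Bθ : L → L → ℝ) (hBθ : ∀ x y, Bθ x y = -killingForm ℝ L (θ x) y)
    (k : ℝ)
    (s : Submodule ℝ L) (πa πn : L →ₗ[ℝ] L)
    (hdecomp : ∀ x ∈ s, πa x + πn x = x)
    (hbn : ∀ x ∈ s, ∀ y ∈ s, πa ⁅x, y⁆ = 0 ∧ πn ⁅x, y⁆ = ⁅x, y⁆)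
    (horth : ∀ x ∈ s, ∀ y ∈ s, ∀ z ∈ s, Bθ ⁅x, y⁆ (πa z) = 0)
    (ipAN : L → L → ℝ)
    (hip : ∀ x y, ipAN x y = k * Bθ (πa x) (πa y) + (k / 2) * Bθ (πn x) (πn y)) :
    ∀ X ∈ s, ∀ Y ∈ s, ∀ Z ∈ s,
      (1 / 2) * (ipAN ⁅X, Y⁆ Z - ipAN ⁅Y, Z⁆ X - ipAN ⁅X, Z⁆ Y)
        = (1 / 4) * (k * Bθ (⁅X, Y⁆ + ⁅θ X, Y⁆ - ⁅X, θ Y⁆) Z) := by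
  intro X hX Y hY Z hZ
  have hB : ∀ x y, Bθ x y = cartanForm θ x y := hBθ
  have hbracket : ∀ a ∈ s, ∀ b ∈ s, ∀ c ∈ s, ipAN ⁅a, b⁆ c = (k / 2) * cartanForm θ ⁅a, b⁆ c :=
    fun a ha b hb c hc => by
      simp only [hip, hB]
      exact weighted_proj_apply_eq_half_apply _ πa πn k (hbn a ha b hb).1 (hbn a ha b hb).2
        (hdecomp c hc) (hB _ _ ▸ horth a ha b hb c hc)
  rw [hbracket X hX Y hY Z hZ, hbracket Y hY Z hZ X hX, hbracket X hX Z hZ Y hY, hB,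
    cartanForm_lie_apply hinv Y, cartanForm_lie_apply hinv X Z, ← lie_skew (θ Y)]
  simp only [map_add, map_sub, map_neg, LinearMap.add_apply, LinearMap.sub_apply,
    LinearMap.neg_apply]
  ring

/-- The Koszul-type formula for the Levi-Civita connection on a ⊕ n:
⟨∇_X Y, Z⟩_{AN} = (1/4)⟨[X,Y] + [θX,Y] − [X,θY], Z⟩, where ⟨·,·⟩ = k·B_θ. -/
theorem stmt_15 {L : Type*} [LieRing L] [LieAlgebra ℝ L] [FiniteDimensional ℝ L]
    (θ : L →ₗ⁅ℝ⁆ L) (hinv : ∀ x, θ (θ x) = x)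
    (Bθ : L → L → ℝ) (hBθ : ∀ x y, Bθ x y = -killingForm ℝ L (θ x) y)
    (k : ℝ) (hk : 0 < k)
    (s : Submodule ℝ L) (πa πn : L →ₗ[ℝ] L)
    (hdecomp : ∀ x ∈ s, πa x + πn x = x)
    (hbs : ∀ x ∈ s, ∀ y ∈ s, ⁅x, y⁆ ∈ s)
    (hbn : ∀ x ∈ s, ∀ y ∈ s, πa ⁅x, y⁆ = 0 ∧ πn ⁅x, y⁆ = ⁅x, y⁆)
    (horth : ∀ x ∈ s, ∀ y ∈ s, ∀ z ∈ s, Bθ ⁅x, y⁆ (πa z) = 0)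
    (ipAN : L → L → ℝ)
    (hip : ∀ x y, ipAN x y = k * Bθ (πa x) (πa y) + (k / 2) * Bθ (πn x) (πn y)) :
    ∀ X ∈ s, ∀ Y ∈ s, ∀ Z ∈ s,
      (1 / 2) * (ipAN ⁅X, Y⁆ Z - ipAN ⁅Y, Z⁆ X - ipAN ⁅X, Z⁆ Y)
        = (1 / 4) * (k * Bθ (⁅X, Y⁆ + ⁅θ X, Y⁆ - ⁅X, θ Y⁆) Z) :=
  stmt_15_general θ hinv Bθ hBθ k s πa πn hdecomp hbn horth ipAN hip
end
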